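/- arXiv:2112.15113 — 4 statements merged into one kernel-verified Lean document; each statement's English description precedes it below -/
import Mathlib

section
/- Let G be a finite group, g ↦ U_g a projective unitary representation of G on ℂ^d (i.e., each U_g is unitary and U_g U_h = c(g,h) U_{gh} for complex numbers c(g,h) of modulus 1), ρ₀ a density matrix on ℂ^d, and let W be the symmetric classical-quantum channel W(g) := U_g ρ₀ U_g†. Then for every t > 0, the supremum over probability distributions Q on G of Ĩ_{1+t}^{↓}(X;E|W × Q) is attained at the uniform distribution P_G on G: sup_Q Ĩ_{1+t}^{↓}(X;E|W × Q) = Ĩ_{1+t}^{↓}(X;E|W × P_G). -/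
open scoped Kronecker ComplexOrder
open Matrix

noncomputable section

/-- Real power of a Hermitian matrix via functional calculus (junk value `0` otherwise). -/
def Matrix.hpow {n : Type*} [Fintype n] [DecidableEq n] (A : Matrix n n ℂ) (r : ℝ) :
    Matrix n n ℂ :=
  if hA : A.IsHermitian then
    (hA.eigenvectorUnitary : Matrix n n ℂ) *
      Matrix.diagonal (fun i => ((hA.eigenvalues i ^ r : ℝ) : ℂ)) *
      (hA.eigenvectorUnitary : Matrix n n ℂ)ᴴ
  else 0

/-- Trace norm ‖A‖₁ = Tr √(AᴴA). -/
def Matrix.traceNorm {n : Type*} [Fintype n] [DecidableEq n] (A : Matrix n n ℂ) : ℝ :=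
  ((Aᴴ * A).hpow (1/2)).trace.re

/-- Density matrix predicate. -/
def IsDensity {n : Type*} [Fintype n] (ρ : Matrix n n ℂ) : Prop :=
  ρ.PosSemidef ∧ ρ.trace = 1

/-- Probability distribution on a finite type. -/
def IsProbDist {X : Type*} [Fintype X] (Q : X → ℝ) : Prop :=
  (∀ x, 0 ≤ Q x) ∧ ∑ x, Q x = 1

/-- Tr[(σ^{−t/(2(1+t))} ρ σ^{−t/(2(1+t))})^{1+t}]. -/
def sandwichTr {n : Type*} [Fintype n] [DecidableEq n] (t : ℝ) (ρ σ : Matrix n n ℂ) : ℝ :=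
  (((σ.hpow (-(t / (2 * (1 + t)))) * ρ * σ.hpow (-(t / (2 * (1 + t))))).hpow (1 + t)).trace).re

/-- Ĩ_{1+t}^{↓}(X;E|W×Q), infimum over positive definite density matrices. -/
def ItildeDown {X n : Type*} [Fintype X] [Fintype n] [DecidableEq n]
    (t : ℝ) (W : X → Matrix n n ℂ) (Q : X → ℝ) : ℝ :=
  ⨅ σ : {σ : Matrix n n ℂ // σ.PosDef ∧ σ.trace = 1},
    (1 / t) * Real.logb 2 (∑ x, Q x * sandwichTr t (W x) σ.1)

/-- The uniform classical state on a finite type. -/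
def uniformState (T : Type*) [Fintype T] [DecidableEq T] : Matrix T T ℂ :=
  (Fintype.card T : ℂ)⁻¹ • 1

/-
Conjugating both arguments of the sandwiched trace by a unitary leaves it unchanged, and
`U_h U_{h⁻¹g}` is `U_g` up to a phase, so rotating the state `σ ↦ U_h σ U_h†` turns the term of
`W(g)` into the term of `W(h⁻¹g)`. Averaging over `h`, the `Q`-weighted objective at the rotated
states has mean equal to the uniformly weighted objective at `σ`, so some rotation does at least
as well; hence the infimum for `Q` is at most the infimum for the uniform distribution.
The bound `Tr[(σ^{-a} ρ σ^{-a})^{1+t}] ≥ d^{-t}` (with `a = t/(2(1+t))`), which follows from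
`Tr[σ^{-a} ρ σ^{-a}] ≥ 1` (the eigenvalues of `σ` lie in `(0, 1]`) and the power mean inequality,
keeps all these infima finite.
-/

namespace Matrix

lemma card_pos_of_trace_eq_one {n R : Type*} [Fintype n] [Semiring R] [Nontrivial R]
    {A : Matrix n n R} (hA : A.trace = 1) : 0 < (Fintype.card n : ℝ) := by
  rcases isEmpty_or_nonempty n with _ | _
  · simp [trace_eq_zero_of_isEmpty] at hA
  · exact_mod_cast Fintype.card_pos

lemma smul_mul_mul_conjTranspose_smul {n : Type*} [Fintype n] (V A : Matrix n n ℂ) {z : ℂ} (hz : ‖z‖ = 1) :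
    z • V * A * (z • V)ᴴ = V * A * Vᴴ := by
  have hzz : z * star z = 1 := by
    rw [Complex.star_def, Complex.mul_conj, Complex.normSq_eq_norm_sq, hz]
    norm_num
  rw [conjTranspose_smul, smul_mul_assoc, smul_mul_assoc, mul_smul_comm, smul_smul, hzz, one_smul]

lemma mul_mul_conjTranspose_of_mul_eq_smul {n : Type*} [Fintype n] {V W X : Matrix n n ℂ} {z : ℂ}
    (hz : ‖z‖ = 1) (h : V * W = z • X) (A : Matrix n n ℂ) :
    V * (W * A * Wᴴ) * Vᴴ = X * A * Xᴴ := by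
  rw [← smul_mul_mul_conjTranspose_smul X A hz, ← h, conjTranspose_mul]
  simp only [mul_assoc]

variable {n : Type*} [Fintype n] [DecidableEq n]

lemma IsHermitian.hpow_eq_cfc {A : Matrix n n ℂ} (hA : A.IsHermitian) (r : ℝ) :
    A.hpow r = cfc (· ^ r : ℝ → ℝ) A := by
  rw [hA.cfc_eq, IsHermitian.cfc, hpow, dif_pos hA]
  rfl

lemma IsHermitian.re_trace_hpow {A : Matrix n n ℂ} (hA : A.IsHermitian) (r : ℝ) :
    (A.hpow r).trace.re = ∑ i, hA.eigenvalues i ^ r := by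
  rw [hpow, dif_pos hA, trace_mul_cycle, ← star_eq_conjTranspose, Unitary.coe_star_mul_self,
    one_mul, trace_diagonal, Complex.re_sum]
  simp only [Complex.ofReal_re]

lemma IsHermitian.re_trace_eq_sum_eigenvalues {A : Matrix n n ℂ} (hA : A.IsHermitian) :
    A.trace.re = ∑ i, hA.eigenvalues i := by
  simp [hA.trace_eq_sum_eigenvalues, Complex.re_sum]

lemma PosDef.spectrum_subset_Ioc {σ : Matrix n n ℂ} (hσ : σ.PosDef) (hσ1 : σ.trace = 1) :
    spectrum ℝ σ ⊆ Set.Ioc 0 1 := by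
  rw [hσ.1.spectrum_real_eq_range_eigenvalues]
  rintro _ ⟨i, rfl⟩
  refine ⟨hσ.eigenvalues_pos i, ?_⟩
  calc hσ.1.eigenvalues i ≤ ∑ j, hσ.1.eigenvalues j :=
        Finset.single_le_sum (fun j _ => (hσ.eigenvalues_pos j).le) (Finset.mem_univ i)
    _ = 1 := by rw [← hσ.1.re_trace_eq_sum_eigenvalues, hσ1, Complex.one_re]

open scoped MatrixOrder in
lemma PosSemidef.trace_mul_nonneg {A B : Matrix n n ℂ} (hA : A.PosSemidef) (hB : B.PosSemidef) :
    0 ≤ (A * B).trace := by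
  obtain ⟨C, rfl⟩ := CStarAlgebra.nonneg_iff_eq_star_mul_self.mp hB.nonneg
  rw [← mul_assoc, trace_mul_cycle]
  exact (hA.mul_mul_conjTranspose_same C).trace_nonneg

open scoped MatrixOrder in
lemma PosDef.posSemidef_hpow_mul_hpow_sub_one {σ : Matrix n n ℂ} (hσ : σ.PosDef)
    (hσ1 : σ.trace = 1) {r : ℝ} (hr : r ≤ 0) : (σ.hpow r * σ.hpow r - 1).PosSemidef := by
  have hcont (f : ℝ → ℝ) : ContinuousOn f (spectrum ℝ σ) := finite_real_spectrum.continuousOn f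
  rw [hσ.1.hpow_eq_cfc, ← cfc_mul _ _ σ (hcont _) (hcont _), ← cfc_one ℝ σ,
    ← cfc_sub _ _ σ (hcont _) (hcont _)]
  refine (cfc_nonneg fun x hx => ?_).posSemidef
  obtain ⟨hx0, hx1⟩ := hσ.spectrum_subset_Ioc hσ1 hx
  have := Real.one_le_rpow_of_pos_of_le_one_of_nonpos hx0 hx1 hr
  simp only [Pi.one_apply, sub_nonneg]
  nlinarith

lemma PosSemidef.re_trace_rpow_le {M : Matrix n n ℂ} (hM : M.PosSemidef) {p : ℝ} (hp : 1 ≤ p) :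
    M.trace.re ^ p ≤ (Fintype.card n : ℝ) ^ (p - 1) * (M.hpow p).trace.re := by
  rw [hM.1.re_trace_eq_sum_eigenvalues, hM.1.re_trace_hpow]
  exact Real.rpow_sum_le_const_mul_sum_rpow_of_nonneg _ hp fun i _ => hM.eigenvalues_nonneg i

lemma one_le_re_trace_hpow_mul_mul_hpow {ρ σ : Matrix n n ℂ} (hρ : IsDensity ρ)
    (hσ : σ.PosDef) (hσ1 : σ.trace = 1) {r : ℝ} (hr : r ≤ 0) :
    1 ≤ (σ.hpow r * ρ * σ.hpow r).trace.re := by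
  set B := σ.hpow r
  have hsplit : (B * ρ * B).trace = ρ.trace + (ρ * (B * B - 1)).trace := by
    rw [trace_mul_cycle, trace_mul_comm, mul_sub, mul_one, trace_sub, add_sub_cancel]
  have hrem := hρ.1.trace_mul_nonneg (hσ.posSemidef_hpow_mul_hpow_sub_one hσ1 hr)
  rw [hsplit, hρ.2, Complex.add_re, Complex.one_re, le_add_iff_nonneg_right]
  exact (Complex.nonneg_iff.mp hrem).1

lemma hpow_unitary_conj {V : Matrix n n ℂ} (hV : V ∈ unitaryGroup n ℂ) (A : Matrix n n ℂ)
    (r : ℝ) : (V * A * Vᴴ).hpow r = V * A.hpow r * Vᴴ := by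
  let φ := Unitary.conjStarAlgAut ℂ (Matrix n n ℂ) ⟨V, hV⟩
  have hφ : ∀ B, φ B = V * B * Vᴴ := fun _ => rfl
  by_cases hA : A.IsHermitian
  · have hφA : (φ A).IsHermitian := hA.isSelfAdjoint.map φ
    rw [← hφ, ← hφ, hA.hpow_eq_cfc, hφA.hpow_eq_cfc,
      StarAlgHomClass.map_cfc φ _ A (finite_real_spectrum.continuousOn _)
        (show Continuous fun B => V * B * Vᴴ by fun_prop)]
  · have hφA : ¬ (φ A).IsHermitian := fun h =>
      hA (by simpa using h.isSelfAdjoint.map φ.symm : IsSelfAdjoint A)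
    rw [← hφ, hpow, dif_neg hφA, hpow, dif_neg hA, mul_zero, zero_mul]

lemma unitary_conj_mul_unitary_conj {V : Matrix n n ℂ} (hV : V ∈ unitaryGroup n ℂ)
    (A B : Matrix n n ℂ) : V * A * Vᴴ * (V * B * Vᴴ) = V * (A * B) * Vᴴ :=
  (map_mul (Unitary.conjStarAlgAut ℂ (Matrix n n ℂ) ⟨V, hV⟩) A B).symm

lemma trace_unitary_conj {V : Matrix n n ℂ} (hV : V ∈ unitaryGroup n ℂ) (A : Matrix n n ℂ) :
    (V * A * Vᴴ).trace = A.trace := by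
  rw [trace_mul_cycle, ← star_eq_conjTranspose, mem_unitaryGroup_iff'.mp hV, one_mul]

lemma PosDef.unitary_conj {V A : Matrix n n ℂ} (hV : V ∈ unitaryGroup n ℂ) (hA : A.PosDef) :
    (V * A * Vᴴ).PosDef :=
  (IsUnit.posDef_star_right_conjugate_iff (Unitary.isUnit_coe (U := ⟨V, hV⟩))).mpr hA

end Matrix

open Matrix

section sandwichTr

variable {n : Type*} [Fintype n] [DecidableEq n]

lemma card_rpow_neg_le_sandwichTr {t : ℝ} (ht : 0 ≤ t) {ρ σ : Matrix n n ℂ} (hρ : IsDensity ρ)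
    (hσ : σ.PosDef) (hσ1 : σ.trace = 1) :
    (Fintype.card n : ℝ) ^ (-t) ≤ sandwichTr t ρ σ := by
  set r := -(t / (2 * (1 + t)))
  have hr : r ≤ 0 := neg_nonpos.mpr (by positivity)
  have hB : (σ.hpow r).IsHermitian := by
    rw [hσ.1.hpow_eq_cfc]
    exact cfc_predicate _ σ
  have hM : (σ.hpow r * ρ * σ.hpow r).PosSemidef := by
    simpa only [hB.eq] using hρ.1.mul_mul_conjTranspose_same (σ.hpow r)
  have hd := card_pos_of_trace_eq_one hσ1
  have hmean := hM.re_trace_rpow_le (p := 1 + t) (by linarith)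
  have hone := one_le_re_trace_hpow_mul_mul_hpow hρ hσ hσ1 hr
  calc (Fintype.card n : ℝ) ^ (-t)
      ≤ (Fintype.card n : ℝ) ^ (-t) * (σ.hpow r * ρ * σ.hpow r).trace.re ^ (1 + t) :=
        le_mul_of_one_le_right (by positivity) (Real.one_le_rpow hone (by linarith))
    _ ≤ (Fintype.card n : ℝ) ^ (-t) * ((Fintype.card n : ℝ) ^ (1 + t - 1) *
          ((σ.hpow r * ρ * σ.hpow r).hpow (1 + t)).trace.re) := by gcongr
    _ = sandwichTr t ρ σ := by
        rw [add_sub_cancel_left, ← mul_assoc, ← Real.rpow_add hd, neg_add_cancel, Real.rpow_zero,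
          one_mul]
        rfl

lemma sandwichTr_unitary_conj {V : Matrix n n ℂ} (hV : V ∈ unitaryGroup n ℂ) (t : ℝ)
    (ρ σ : Matrix n n ℂ) : sandwichTr t (V * ρ * Vᴴ) (V * σ * Vᴴ) = sandwichTr t ρ σ := by
  simp only [sandwichTr, hpow_unitary_conj hV, unitary_conj_mul_unitary_conj hV,
    trace_unitary_conj hV]

lemma sandwichTr_projective_orbit {G : Type*} [Group G] {U : G → Matrix n n ℂ}
    (hU : ∀ g, U g ∈ unitaryGroup n ℂ) {c : G → G → ℂ} (hc : ∀ g h, ‖c g h‖ = 1)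
    (hrep : ∀ g h, U g * U h = c g h • U (g * h)) (t : ℝ) (ρ σ : Matrix n n ℂ) (g h : G) :
    sandwichTr t (U g * ρ * (U g)ᴴ) (U h * σ * (U h)ᴴ)
      = sandwichTr t (U (h⁻¹ * g) * ρ * (U (h⁻¹ * g))ᴴ) σ := by
  have horbit := mul_mul_conjTranspose_of_mul_eq_smul (hc h (h⁻¹ * g)) (hrep h (h⁻¹ * g)) ρ
  rw [mul_inv_cancel_left] at horbit
  rw [← horbit, sandwichTr_unitary_conj (hU h)]

end sandwichTr

lemma exists_sum_mul_le_average_of_covariant {G ι : Type*} [Group G] [Fintype G]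
    (F : G → ι → ℝ) (τ : G → ι → ι) (hF : ∀ g h x, F g (τ h x) = F (h⁻¹ * g) x)
    {Q : G → ℝ} (hQ : ∑ g, Q g = 1) (x : ι) :
    ∃ h, ∑ g, Q g * F g (τ h x) ≤ ∑ g, (Fintype.card G : ℝ)⁻¹ * F g x := by
  have hG : (Fintype.card G : ℝ) ≠ 0 := by positivity
  have hsum : ∑ h, ∑ g, Q g * F g (τ h x) = ∑ _h : G, ∑ g, (Fintype.card G : ℝ)⁻¹ * F g x :=
    calc ∑ h, ∑ g, Q g * F g (τ h x) = ∑ g, Q g * ∑ h, F (h⁻¹ * g) x := by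
          simp only [hF, Finset.mul_sum]
          exact Finset.sum_comm
      _ = ∑ g, Q g * ∑ k, F k x := by
          congr! 2 with g
          exact Equiv.sum_comp ((Equiv.inv G).trans (Equiv.mulRight g)) (F · x)
      _ = ∑ _h : G, ∑ g, (Fintype.card G : ℝ)⁻¹ * F g x := by
          rw [← Finset.sum_mul, hQ, one_mul, Finset.sum_const, ← Finset.mul_sum, Finset.card_univ,
            nsmul_eq_mul, mul_inv_cancel_left₀ hG]
  obtain ⟨h, -, hh⟩ := Finset.exists_le_of_sum_le Finset.univ_nonempty hsum.le
  exact ⟨h, hh⟩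

abbrev PosDefState (n : Type*) [Fintype n] := {σ : Matrix n n ℂ // σ.PosDef ∧ σ.trace = 1}

def PosDefState.unitaryConj {n : Type*} [Fintype n] [DecidableEq n] {V : Matrix n n ℂ}
    (hV : V ∈ unitaryGroup n ℂ) (σ : PosDefState n) : PosDefState n :=
  ⟨V * σ.1 * Vᴴ, σ.2.1.unitary_conj hV, (trace_unitary_conj hV σ.1).trans σ.2.2⟩

section ItildeDown

variable {X n : Type*} [Fintype X] [Fintype n] [DecidableEq n] {t : ℝ}
  {W : X → Matrix n n ℂ} {Q : X → ℝ}

lemma card_rpow_neg_le_sum_sandwichTr (ht : 0 ≤ t) (hW : ∀ x, IsDensity (W x))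
    (hQ : IsProbDist Q) (σ : PosDefState n) :
    (Fintype.card n : ℝ) ^ (-t) ≤ ∑ x, Q x * sandwichTr t (W x) σ.1 :=
  calc (Fintype.card n : ℝ) ^ (-t) = ∑ x, Q x * (Fintype.card n : ℝ) ^ (-t) := by
        rw [← Finset.sum_mul, hQ.2, one_mul]
    _ ≤ ∑ x, Q x * sandwichTr t (W x) σ.1 := Finset.sum_le_sum fun x _ =>
        mul_le_mul_of_nonneg_left (card_rpow_neg_le_sandwichTr ht (hW x) σ.2.1 σ.2.2) (hQ.1 x)

lemma ItildeDown_le_of_forall_exists (ht : 0 < t) (hW : ∀ x, IsDensity (W x))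
    (hQ : IsProbDist Q) {Q' : X → ℝ}
    (h : ∀ σ : PosDefState n, ∃ σ' : PosDefState n,
      ∑ x, Q x * sandwichTr t (W x) σ'.1 ≤ ∑ x, Q' x * sandwichTr t (W x) σ.1) :
    ItildeDown t W Q ≤ ItildeDown t W Q' := by
  rcases isEmpty_or_nonempty (PosDefState n) with _ | _
  · simp [ItildeDown]
  have hlow := card_rpow_neg_le_sum_sandwichTr ht.le hW hQ
  have hpos (σ : PosDefState n) : 0 < (Fintype.card n : ℝ) ^ (-t) :=
    Real.rpow_pos_of_pos (card_pos_of_trace_eq_one σ.2.2) _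
  -- A real `⨅` of an unbounded family is `0`, so `ciInf_le` needs this bound.
  have hbdd : BddBelow (Set.range fun σ : PosDefState n =>
      1 / t * Real.logb 2 (∑ x, Q x * sandwichTr t (W x) σ.1)) := by
    refine ⟨1 / t * Real.logb 2 ((Fintype.card n : ℝ) ^ (-t)), ?_⟩
    rintro _ ⟨σ, rfl⟩
    exact mul_le_mul_of_nonneg_left (Real.logb_le_logb_of_le one_lt_two (hpos σ) (hlow σ))
      (by positivity)
  refine le_ciInf fun σ => ?_
  obtain ⟨σ', hσ'⟩ := h σ
  refine (ciInf_le hbdd σ').trans ?_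
  exact mul_le_mul_of_nonneg_left
    (Real.logb_le_logb_of_le one_lt_two ((hpos σ').trans_le (hlow σ')) hσ') (by positivity)

end ItildeDown

/-- For a symmetric cq channel arising from a projective unitary
representation of a finite group, the optimized sandwiched Rényi mutual information is
attained at the uniform distribution. -/
theorem ItildeDown_symmetric_uniform
    {G : Type*} [Group G] [Fintype G] {d : ℕ}
    (U : G → Matrix (Fin d) (Fin d) ℂ)
    (hU : ∀ g, U g ∈ Matrix.unitaryGroup (Fin d) ℂ)
    (c : G → G → ℂ) (hc : ∀ g h, ‖c g h‖ = 1)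
    (hrep : ∀ g h, U g * U h = c g h • U (g * h))
    (ρ₀ : Matrix (Fin d) (Fin d) ℂ) (hρ₀ : IsDensity ρ₀)
    (t : ℝ) (ht : 0 < t) :
    (⨆ Q : {Q : G → ℝ // IsProbDist Q},
        ItildeDown t (fun g => U g * ρ₀ * (U g)ᴴ) Q.1)
      = ItildeDown t (fun g => U g * ρ₀ * (U g)ᴴ)
          (fun _ => (Fintype.card G : ℝ)⁻¹) := by
  have hW (g : G) : IsDensity (U g * ρ₀ * (U g)ᴴ) :=
    ⟨hρ₀.1.mul_mul_conjTranspose_same _, (trace_unitary_conj (hU g) ρ₀).trans hρ₀.2⟩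
  have hunif : IsProbDist (fun _ : G => (Fintype.card G : ℝ)⁻¹) :=
    ⟨fun _ => by positivity, by simp⟩
  have hle (Q : {Q : G → ℝ // IsProbDist Q}) : ItildeDown t (fun g => U g * ρ₀ * (U g)ᴴ) Q.1
      ≤ ItildeDown t (fun g => U g * ρ₀ * (U g)ᴴ) (fun _ => (Fintype.card G : ℝ)⁻¹) :=
    ItildeDown_le_of_forall_exists ht hW Q.2 fun σ => by
      obtain ⟨h, hh⟩ := exists_sum_mul_le_average_of_covariant
        (fun g (σ : PosDefState (Fin d)) => sandwichTr t (U g * ρ₀ * (U g)ᴴ) σ.1)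
        (fun h σ => σ.unitaryConj (hU h))
        (fun g h σ => sandwichTr_projective_orbit hU hc hrep t ρ₀ σ.1 g h) Q.2.2 σ
      exact ⟨_, hh⟩
  have : Nonempty {Q : G → ℝ // IsProbDist Q} := ⟨⟨_, hunif⟩⟩
  exact le_antisymm (ciSup_le hle)
    (le_ciSup_of_le ⟨_, Set.forall_mem_range.2 hle⟩ ⟨_, hunif⟩ le_rfl)

end
end

section
/- Let ℳ, 𝒴, 𝒮' be finite sets and let {g_{s'} : ℳ × 𝒴 → 𝒴}_{s'∈𝒮'} be a family of functions such that for every m ∈ ℳ and s' ∈ 𝒮', the map y ↦ g_{s'}(m,y) is a bijection of 𝒴. For each (m,y) ∈ ℳ×𝒴 let τ_{E|m,y} be a density matrix on ℂ^d. Define d(M,Y;E) := min over density matrices σ_E on ℂ^d of ‖ Σ_{m,y} (1/(|ℳ||𝒴|)) |m,y⟩⟨m,y| ⊗ τ_{E|m,y} − P_{ℳ×𝒴} ⊗ σ_E ‖₁, and define d(M;E S' C) := min over density matrices σ on the composite classical-quantum system E S' C of ‖ Σ_{m,y,s'} (1/(|ℳ||𝒴||𝒮'|)) |m⟩⟨m|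 ⊗ τ_{E|m,y} ⊗ |s'⟩⟨s'| ⊗ |g_{s'}(m,y)⟩⟨g_{s'}(m,y)| − P_ℳ ⊗ σ ‖₁, where P_ℳ and P_{ℳ×𝒴} denote uniform classical states. Then d(M;E S' C) ≤ d(M,Y;E). -/
open scoped Kronecker ComplexOrder
open Matrix

noncomputable section

/-!
Each candidate σ_E on the right is matched on the left by σ_E ⊗ P_{𝒮'×𝒴}, with equal trace
norms. Once the register E is moved to the end, both operators are block diagonal in their
classical registers, and the trace norm of a block-diagonal operator is the sum of the trace
norms of its blocks (the positive square root of A†A is computed blockwise). The blocks are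
uniformly weighted differences τ_{E|m,y} − σ_E; on the left they are indexed by (m, s', c) with
y = g_{s'}(m, ·)⁻¹(c), which runs through every (m, y) exactly |𝒮'| times, so both trace norms
equal the average of ‖τ_{E|m,y} − σ_E‖₁.
-/

section TraceNorm

open scoped MatrixOrder

variable {n : Type*} [Fintype n] [DecidableEq n]

lemma Matrix.hpow_one_half_of_posSemidef {A : Matrix n n ℂ} (hA : A.PosSemidef) :
    A.hpow (1 / 2) = CFC.sqrt A := by
  rw [CFC.sqrt_eq_cfc, cfc_nnreal_eq_real _ A, hA.1.cfc_eq, IsHermitian.cfc, Matrix.hpow,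
    dif_pos hA.1, Unitary.conjStarAlgAut_apply]
  congr 2
  ext i j
  simp [diagonal_apply, Real.sqrt_eq_rpow, max_eq_left (hA.eigenvalues_nonneg i)]

lemma Matrix.traceNorm_eq_of_mul_self {A B : Matrix n n ℂ} (hB : B.PosSemidef)
    (h : B * B = Aᴴ * A) : A.traceNorm = B.trace.re := by
  rw [traceNorm, hpow_one_half_of_posSemidef (posSemidef_conjTranspose_mul_self A),
    CFC.sqrt_unique h hB.nonneg]

lemma Matrix.traceNorm_eq_sqrt (A : Matrix n n ℂ) :
    A.traceNorm = (CFC.sqrt (Aᴴ * A)).trace.re :=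
  traceNorm_eq_of_mul_self (CFC.sqrt_nonneg _).posSemidef
    (CFC.sqrt_mul_sqrt_self _ (posSemidef_conjTranspose_mul_self A).nonneg)

lemma Matrix.traceNorm_nonneg (A : Matrix n n ℂ) : 0 ≤ A.traceNorm := by
  rw [traceNorm_eq_sqrt]
  exact (Complex.nonneg_iff.mp (CFC.sqrt_nonneg _).posSemidef.trace_nonneg).1

lemma Matrix.traceNorm_smul (c : ℂ) (A : Matrix n n ℂ) :
    (c • A).traceNorm = ‖c‖ * A.traceNorm := by
  rw [traceNorm_eq_of_mul_self (B := (‖c‖ : ℂ) • CFC.sqrt (Aᴴ * A))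
    ((CFC.sqrt_nonneg _).posSemidef.smul (by positivity)), trace_smul, traceNorm_eq_sqrt,
    smul_eq_mul, Complex.re_ofReal_mul]
  rw [smul_mul_smul, CFC.sqrt_mul_sqrt_self _ (posSemidef_conjTranspose_mul_self A).nonneg,
    conjTranspose_smul, smul_mul_smul, Complex.star_def, Complex.conj_mul', sq]

lemma Matrix.traceNorm_submatrix {m : Type*} [Fintype m] [DecidableEq m] (A : Matrix n n ℂ)
    (e : m ≃ n) : (A.submatrix e e).traceNorm = A.traceNorm := by
  rw [traceNorm_eq_of_mul_self (B := (CFC.sqrt (Aᴴ * A)).submatrix e e)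
    ((CFC.sqrt_nonneg _).posSemidef.submatrix e), traceNorm_eq_sqrt]
  · simp only [trace, diag_apply, submatrix_apply]
    rw [e.sum_comp (fun i => (CFC.sqrt (Aᴴ * A)) i i)]
  · rw [submatrix_mul_equiv, CFC.sqrt_mul_sqrt_self _ (posSemidef_conjTranspose_mul_self A).nonneg,
      conjTranspose_submatrix, submatrix_mul_equiv]

lemma Matrix.posSemidef_single_one {X : Type*} [DecidableEq X] (x : X) :
    (single x x (1 : ℂ)).PosSemidef := by
  rw [← diagonal_single]
  exact .diagonal (Pi.single_nonneg.mpr zero_le_one)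

lemma Matrix.sum_single_kronecker_mul_sum_single_kronecker {R X m : Type*} [CommSemiring R]
    [Fintype X] [DecidableEq X] [Fintype m] (A B : X → Matrix m m R) :
    (∑ x, single x x (1 : R) ⊗ₖ A x) * (∑ x, single x x (1 : R) ⊗ₖ B x)
      = ∑ x, single x x (1 : R) ⊗ₖ (A x * B x) := by
  simp_rw [Finset.sum_mul, Finset.mul_sum, ← mul_kronecker_mul]
  refine Finset.sum_congr rfl fun x _ =>
    (Finset.sum_eq_single x (fun y _ hyx => ?_) (by simp)).trans ?_
  · rw [single_mul_single_of_ne (h := hyx.symm), zero_kronecker]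
  · rw [single_mul_single_same, one_mul]

lemma Matrix.traceNorm_sum_single_kronecker {X : Type*} [Fintype X] [DecidableEq X]
    (A : X → Matrix n n ℂ) :
    (∑ x, single x x (1 : ℂ) ⊗ₖ A x).traceNorm = ∑ x, (A x).traceNorm := by
  rw [traceNorm_eq_of_mul_self (B := ∑ x, single x x (1 : ℂ) ⊗ₖ CFC.sqrt ((A x)ᴴ * A x))]
  · simp only [trace_sum, trace_kronecker, trace_single_eq_same, one_mul, Complex.re_sum,
      traceNorm_eq_sqrt]
  · exact posSemidef_sum _ fun x _ =>
      (posSemidef_single_one x).kronecker (CFC.sqrt_nonneg _).posSemidef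
  · have hsq (x : X) : CFC.sqrt ((A x)ᴴ * A x) * CFC.sqrt ((A x)ᴴ * A x) = (A x)ᴴ * A x :=
      CFC.sqrt_mul_sqrt_self _ (posSemidef_conjTranspose_mul_self _).nonneg
    simp only [conjTranspose_sum, conjTranspose_kronecker, conjTranspose_single, star_one,
      sum_single_kronecker_mul_sum_single_kronecker, hsq]

end TraceNorm

lemma Matrix.kronecker_kronecker_eq_reindex {R l m n : Type*} [CommSemigroup R]
    (A : Matrix l l R) (B : Matrix m m R) (C : Matrix n n R) :
    A ⊗ₖ (B ⊗ₖ C)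
      = reindex ((Equiv.prodAssoc l n m).trans (Equiv.prodCongrRight fun _ => Equiv.prodComm n m))
          ((Equiv.prodAssoc l n m).trans (Equiv.prodCongrRight fun _ => Equiv.prodComm n m))
          ((A ⊗ₖ C) ⊗ₖ B) := by
  ext ⟨a, b, c⟩ ⟨a', b', c'⟩
  simp [mul_comm, mul_left_comm]

section UniformState

variable {n X : Type*} [Fintype X] [DecidableEq X]

lemma uniformState_kronecker (B : Matrix n n ℂ) :
    uniformState X ⊗ₖ B = ∑ x, single x x (1 : ℂ) ⊗ₖ ((Fintype.card X : ℂ)⁻¹ • B) := by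
  ext ⟨x, i⟩ ⟨y, j⟩
  by_cases h : x = y
  · simp [uniformState, Matrix.sum_apply, single_apply, h]
  · simp [uniformState, Matrix.sum_apply, single_apply, h]
    exact (Finset.sum_eq_zero fun c _ => if_neg fun hc => h (hc.1.symm.trans hc.2)).symm

lemma uniformState_kronecker_uniformState {Z : Type*} [Fintype Z] [DecidableEq Z] :
    uniformState X ⊗ₖ uniformState Z = uniformState (X × Z) := by
  simp only [uniformState, smul_kronecker, kronecker_smul, one_kronecker_one, smul_smul,
    Fintype.card_prod, Nat.cast_mul, mul_inv, mul_comm]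

lemma isDensity_uniformState [Nonempty X] : IsDensity (uniformState X) :=
  ⟨PosSemidef.one.smul (by positivity), by simp [uniformState, trace_one]⟩

lemma Matrix.traceNorm_sum_single_kronecker_sub_uniformState_kronecker [Fintype n] [DecidableEq n]
    (τ : X → Matrix n n ℂ) (σ : Matrix n n ℂ) :
    (∑ x, (Fintype.card X : ℂ)⁻¹ • (single x x (1 : ℂ) ⊗ₖ τ x) - uniformState X ⊗ₖ σ).traceNorm
      = (Fintype.card X : ℝ)⁻¹ * ∑ x, (τ x - σ).traceNorm := by
  have hblocks : ∑ x, (Fintype.card X : ℂ)⁻¹ • (single x x (1 : ℂ) ⊗ₖ τ x)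
        - uniformState X ⊗ₖ σ
      = ∑ x, single x x (1 : ℂ) ⊗ₖ ((Fintype.card X : ℂ)⁻¹ • (τ x - σ)) := by
    simp only [uniformState_kronecker, ← Finset.sum_sub_distrib, ← kronecker_smul, smul_sub]
    ext ⟨x, i⟩ ⟨y, j⟩
    simp [Matrix.sum_apply, mul_sub]
  simp [hblocks, traceNorm_sum_single_kronecker, traceNorm_smul, Finset.mul_sum]

end UniformState

lemma IsDensity.nonempty {n : Type*} [Fintype n] {ρ : Matrix n n ℂ} (hρ : IsDensity ρ) :
    Nonempty n := by
  by_contra h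
  rw [not_nonempty_iff] at h
  simpa [trace] using hρ.2

lemma IsDensity.kronecker {n m : Type*} [Fintype n] [Fintype m] {ρ : Matrix n n ℂ}
    {σ : Matrix m m ℂ} (hρ : IsDensity ρ) (hσ : IsDensity σ) : IsDensity (ρ ⊗ₖ σ) :=
  ⟨hρ.1.kronecker hσ.1, by rw [trace_kronecker, hρ.2, hσ.2, one_mul]⟩

section Hash

variable {n M Y S : Type*} [Fintype M] [DecidableEq M]
  [Fintype Y] [DecidableEq Y] [Fintype S] [DecidableEq S]
  (g : S → M × Y → Y) (τ : M × Y → Matrix n n ℂ) (σ : Matrix n n ℂ)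

lemma sum_hash_sub_uniformState_kronecker_eq_reindex
    (hg : ∀ m s, Function.Bijective fun y => g s (m, y)) :
    ∑ m : M, ∑ y : Y, ∑ s : S,
        ((Fintype.card M : ℂ) * (Fintype.card Y : ℂ) * (Fintype.card S : ℂ))⁻¹ •
          (single m m (1 : ℂ) ⊗ₖ (τ (m, y) ⊗ₖ
            (single s s (1 : ℂ) ⊗ₖ single (g s (m, y)) (g s (m, y)) (1 : ℂ))))
      - uniformState M ⊗ₖ (σ ⊗ₖ uniformState (S × Y))
      = reindex ((Equiv.prodAssoc M (S × Y) n).trans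
            (Equiv.prodCongrRight fun _ => Equiv.prodComm (S × Y) n))
          ((Equiv.prodAssoc M (S × Y) n).trans
            (Equiv.prodCongrRight fun _ => Equiv.prodComm (S × Y) n))
          (∑ z : M × S × Y, (Fintype.card (M × S × Y) : ℂ)⁻¹ •
              (single z z (1 : ℂ) ⊗ₖ τ (z.1, (Equiv.ofBijective _ (hg z.1 z.2.1)).symm z.2.2))
            - uniformState (M × S × Y) ⊗ₖ σ) := by
  set π := (Equiv.prodAssoc M (S × Y) n).trans
    (Equiv.prodCongrRight fun _ => Equiv.prodComm (S × Y) n)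
  have hterm (m : M) (y : Y) (s : S) :
      single m m (1 : ℂ) ⊗ₖ (τ (m, y) ⊗ₖ
          (single s s (1 : ℂ) ⊗ₖ single (g s (m, y)) (g s (m, y)) (1 : ℂ)))
        = reindex π π (single (m, s, g s (m, y)) (m, s, g s (m, y)) (1 : ℂ) ⊗ₖ τ (m, y)) := by
    rw [kronecker_kronecker_eq_reindex, single_kronecker_single, single_kronecker_single,
      mul_one, mul_one]
  have huniform : uniformState M ⊗ₖ (σ ⊗ₖ uniformState (S × Y))
      = reindex π π (uniformState (M × S × Y) ⊗ₖ σ) := by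
    rw [← uniformState_kronecker_uniformState (X := M) (Z := S × Y)]
    exact kronecker_kronecker_eq_reindex _ _ _
  have hcq : ∑ m : M, ∑ y : Y, ∑ s : S,
        ((Fintype.card M : ℂ) * (Fintype.card Y : ℂ) * (Fintype.card S : ℂ))⁻¹ •
          (single (m, s, g s (m, y)) (m, s, g s (m, y)) (1 : ℂ) ⊗ₖ τ (m, y))
      = ∑ z : M × S × Y, (Fintype.card (M × S × Y) : ℂ)⁻¹ •
          (single z z (1 : ℂ) ⊗ₖ τ (z.1, (Equiv.ofBijective _ (hg z.1 z.2.1)).symm z.2.2)) := by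
    have hcard : ((Fintype.card M : ℂ) * (Fintype.card Y : ℂ) * (Fintype.card S : ℂ))⁻¹
        = (Fintype.card (M × S × Y) : ℂ)⁻¹ := by
      simp only [Fintype.card_prod, Nat.cast_mul]
      ring
    rw [hcard, Fintype.sum_prod_type]
    refine Finset.sum_congr rfl fun m _ => ?_
    rw [Finset.sum_comm, Fintype.sum_prod_type]
    refine Finset.sum_congr rfl fun s _ => ?_
    have hg_symm (c : Y) : g s (m, (Equiv.ofBijective _ (hg m s)).symm c) = c :=
      (Equiv.ofBijective _ (hg m s)).apply_symm_apply c
    rw [← (Equiv.ofBijective _ (hg m s)).symm.sum_comp]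
    simp only [hg_symm]
  simp only [hterm, huniform, ← hcq, ← coe_reindexLinearEquiv ℂ ℂ, ← map_smul, ← map_sum,
    ← map_sub]

lemma traceNorm_hash_sub_uniformState_kronecker [Fintype n] [DecidableEq n]
    (hg : ∀ m s, Function.Bijective fun y => g s (m, y)) [Nonempty S] :
    (∑ m : M, ∑ y : Y, ∑ s : S,
        ((Fintype.card M : ℂ) * (Fintype.card Y : ℂ) * (Fintype.card S : ℂ))⁻¹ •
          (single m m (1 : ℂ) ⊗ₖ (τ (m, y) ⊗ₖ
            (single s s (1 : ℂ) ⊗ₖ single (g s (m, y)) (g s (m, y)) (1 : ℂ))))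
      - uniformState M ⊗ₖ (σ ⊗ₖ uniformState (S × Y))).traceNorm
      = (Fintype.card (M × Y) : ℝ)⁻¹ * ∑ my, (τ my - σ).traceNorm := by
  have hsum : ∑ z : M × S × Y,
        (τ (z.1, (Equiv.ofBijective _ (hg z.1 z.2.1)).symm z.2.2) - σ).traceNorm
      = Fintype.card S * ∑ my, (τ my - σ).traceNorm := by
    rw [Fintype.sum_prod_type, Fintype.sum_prod_type, Finset.mul_sum]
    refine Finset.sum_congr rfl fun m _ => ?_
    simp only [Fintype.sum_prod_type,
      (Equiv.ofBijective _ (hg m _)).symm.sum_comp fun y => (τ (m, y) - σ).traceNorm,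
      Finset.sum_const, Finset.card_univ, nsmul_eq_mul]
  rw [sum_hash_sub_uniformState_kronecker_eq_reindex g τ σ hg, reindex_apply, traceNorm_submatrix,
    traceNorm_sum_single_kronecker_sub_uniformState_kronecker, hsum, ← mul_assoc]
  congr 1
  simp only [Fintype.card_prod, Nat.cast_mul]
  field_simp

end Hash

theorem error_verification_leakage_general
    {M' Y' S' : Type*} [Fintype M'] [Fintype Y'] [Fintype S']
    [DecidableEq M'] [DecidableEq Y'] [DecidableEq S']
    {d : ℕ}
    (g : S' → M' × Y' → Y')
    (hg : ∀ (m : M') (s' : S'), Function.Bijective (fun y => g s' (m, y)))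
    (τ : M' × Y' → Matrix (Fin d) (Fin d) ℂ) :
    (⨅ σ : {σ : Matrix (Fin d × S' × Y') (Fin d × S' × Y') ℂ // IsDensity σ},
      Matrix.traceNorm
        ((∑ m : M', ∑ y : Y', ∑ s' : S',
            ((Fintype.card M' : ℂ) * (Fintype.card Y' : ℂ) * (Fintype.card S' : ℂ))⁻¹ •
              (Matrix.single m m (1 : ℂ) ⊗ₖ
                (τ (m, y) ⊗ₖ
                  (Matrix.single s' s' (1 : ℂ) ⊗ₖ
                    Matrix.single (g s' (m, y)) (g s' (m, y)) (1 : ℂ)))))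
          - uniformState M' ⊗ₖ σ.1))
    ≤ ⨅ σ : {σ : Matrix (Fin d) (Fin d) ℂ // IsDensity σ},
        Matrix.traceNorm
          ((∑ my : M' × Y',
              ((Fintype.card M' : ℂ) * (Fintype.card Y' : ℂ))⁻¹ •
                (Matrix.single my my (1 : ℂ) ⊗ₖ τ my))
            - uniformState (M' × Y') ⊗ₖ σ.1) := by
  rcases isEmpty_or_nonempty {σ : Matrix (Fin d × S' × Y') (Fin d × S' × Y') ℂ // IsDensity σ}
    with hempty | ⟨⟨ρ, hρ⟩⟩
  · rw [Real.iInf_of_isEmpty]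
    exact Real.iInf_nonneg fun _ => traceNorm_nonneg _
  obtain ⟨i, s, y⟩ := hρ.nonempty
  have : Nonempty S' := ⟨s⟩
  have : Nonempty Y' := ⟨y⟩
  have : Nonempty (Fin d) := ⟨i⟩
  have : Nonempty {σ : Matrix (Fin d) (Fin d) ℂ // IsDensity σ} := ⟨⟨_, isDensity_uniformState⟩⟩
  refine le_ciInf fun ⟨σ, hσ⟩ =>
    ciInf_le_of_le ⟨0, Set.forall_mem_range.2 fun _ => traceNorm_nonneg _⟩
      ⟨σ ⊗ₖ uniformState (S' × Y'), hσ.kronecker isDensity_uniformState⟩ ?_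
  have hcard : ((Fintype.card M' : ℂ) * (Fintype.card Y' : ℂ))⁻¹
      = (Fintype.card (M' × Y') : ℂ)⁻¹ := by
    rw [Fintype.card_prod, Nat.cast_mul]
  rw [traceNorm_hash_sub_uniformState_kronecker g τ σ hg, hcard,
    traceNorm_sum_single_kronecker_sub_uniformState_kronecker]

/-- Publishing the seed `S'` and the hash value `C = g_{S'}(M,Y)` of an
error-verification hash does not increase the information leakage about `M` beyond the
leakage of `(M,Y)`. -/
theorem error_verification_leakage
    {M' Y' S' : Type*} [Fintype M'] [Fintype Y'] [Fintype S']
    [DecidableEq M'] [DecidableEq Y'] [DecidableEq S']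
    {d : ℕ}
    (g : S' → M' × Y' → Y')
    (hg : ∀ (m : M') (s' : S'), Function.Bijective (fun y => g s' (m, y)))
    (τ : M' × Y' → Matrix (Fin d) (Fin d) ℂ) (hτ : ∀ my, IsDensity (τ my)) :
    (⨅ σ : {σ : Matrix (Fin d × S' × Y') (Fin d × S' × Y') ℂ // IsDensity σ},
      Matrix.traceNorm
        ((∑ m : M', ∑ y : Y', ∑ s' : S',
            ((Fintype.card M' : ℂ) * (Fintype.card Y' : ℂ) * (Fintype.card S' : ℂ))⁻¹ •
              (Matrix.single m m (1 : ℂ) ⊗ₖ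
                (τ (m, y) ⊗ₖ
                  (Matrix.single s' s' (1 : ℂ) ⊗ₖ
                    Matrix.single (g s' (m, y)) (g s' (m, y)) (1 : ℂ)))))
          - uniformState M' ⊗ₖ σ.1))
    ≤ ⨅ σ : {σ : Matrix (Fin d) (Fin d) ℂ // IsDensity σ},
        Matrix.traceNorm
          ((∑ my : M' × Y',
              ((Fintype.card M' : ℂ) * (Fintype.card Y' : ℂ))⁻¹ •
                (Matrix.single my my (1 : ℂ) ⊗ₖ τ my))
            - uniformState (M' × Y') ⊗ₖ σ.1) :=
  error_verification_leakage_general g hg τ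
end
end

section
/- Fix a prime p. Let P and P' be probability distributions on (ℤ/pℤ)² such that for each direction (a,c) ∈ {(1,0), (1,1), …, (1,p−1), (0,1)} the induced distributions of the ℤ/pℤ-valued random variable aX + cZ coincide, i.e., for every s ∈ ℤ/pℤ, Σ_{(x,z): ax+cz=s} P(x,z) = Σ_{(x,z): ax+cz=s} P'(x,z). Then P = P'. In particular, a probability distribution on (ℤ/pℤ)² is uniquely determined by these p+1 one-dimensional marginal distributions. -/
/-- A probability distribution on `(ℤ/pℤ)²` is uniquely determined by the
`p+1` one-dimensional marginal distributions of `X + cZ` (for `c = 0,…,p−1`) and of `Z`. -/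
theorem dist_determined_by_marginals
    (p : ℕ) [Fact p.Prime]
    (P P' : ZMod p × ZMod p → ℝ)
    (hP0 : ∀ xz, 0 ≤ P xz) (hP1 : ∑ xz : ZMod p × ZMod p, P xz = 1)
    (hP'0 : ∀ xz, 0 ≤ P' xz) (hP'1 : ∑ xz : ZMod p × ZMod p, P' xz = 1)
    (hX : ∀ c s : ZMod p,
      ∑ xz ∈ Finset.univ.filter (fun xz : ZMod p × ZMod p => xz.1 + c * xz.2 = s), P xz
        = ∑ xz ∈ Finset.univ.filter (fun xz : ZMod p × ZMod p => xz.1 + c * xz.2 = s), P' xz)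
    (hZ : ∀ s : ZMod p,
      ∑ xz ∈ Finset.univ.filter (fun xz : ZMod p × ZMod p => xz.2 = s), P xz
        = ∑ xz ∈ Finset.univ.filter (fun xz : ZMod p × ZMod p => xz.2 = s), P' xz) :
    P = P' := by
  have hprime : p.Prime := Fact.out
  have hp : (p : ℝ) ≠ 0 := Nat.cast_ne_zero.mpr hprime.pos.ne'
  set Q : ZMod p × ZMod p → ℝ := fun xz => P xz - P' xz with hQdef
  have hQsum : ∑ xz : ZMod p × ZMod p, Q xz = 0 := by
    simp [hQdef, Finset.sum_sub_distrib, hP1, hP'1]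
  have hQX : ∀ c s : ZMod p,
      ∑ xz ∈ Finset.univ.filter (fun xz : ZMod p × ZMod p => xz.1 + c * xz.2 = s), Q xz = 0 := by
    intro c s
    simp [hQdef, Finset.sum_sub_distrib, hX c s]
  have hQZ : ∀ s : ZMod p,
      ∑ xz ∈ Finset.univ.filter (fun xz : ZMod p × ZMod p => xz.2 = s), Q xz = 0 := by
    intro s
    simp [hQdef, Finset.sum_sub_distrib, hZ s]
  have key : ∀ xz₀ : ZMod p × ZMod p, Q xz₀ = 0 := by
    rintro ⟨x₀, z₀⟩
    have hcard : ∀ x z : ZMod p,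
        (((Finset.univ.filter (fun c : ZMod p => x + c * z = x₀ + c * z₀)).card : ℝ)
          + (if z = z₀ then (1:ℝ) else 0))
        = 1 + (if (x, z) = (x₀, z₀) then (p:ℝ) else 0) := by
      intro x z
      by_cases hz : z = z₀
      · subst hz
        by_cases hx : x = x₀
        · subst hx
          have : (Finset.univ.filter (fun c : ZMod p => x + c * z = x + c * z)) =
              (Finset.univ : Finset (ZMod p)) := by simp
          simp [this, ZMod.card, add_comm]
        · have hne : ∀ c : ZMod p, ¬ (x + c * z = x₀ + c * z) := by
            intro c h
            exact hx (add_right_cancel h)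
          have hprod : ¬ ((x, z) = (x₀, z)) := by
            simp [Prod.ext_iff, hx]
          simp [hne, hprod]
      · have hzz : z - z₀ ≠ 0 := sub_ne_zero.mpr hz
        have : (Finset.univ.filter (fun c : ZMod p => x + c * z = x₀ + c * z₀)) =
            {(x₀ - x) / (z - z₀)} := by
          ext c
          simp only [Finset.mem_filter, Finset.mem_univ, true_and, Finset.mem_singleton]
          constructor
          · intro h
            have h2 : c * (z - z₀) = x₀ - x := by ring_nf; linear_combination h
            field_simp
            linear_combination h2
          · intro h
            subst h
            field_simp
            ring
        have hprod : ¬ ((x, z) = (x₀, z₀)) := by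
          simp [Prod.ext_iff, hz]
        simp [this, hz, hprod]
    have hmain : (∑ xz : ZMod p × ZMod p, Q xz *
        (((Finset.univ.filter (fun c : ZMod p => xz.1 + c * xz.2 = x₀ + c * z₀)).card : ℝ)
          + (if xz.2 = z₀ then (1:ℝ) else 0))) = 0 := by
      have step2 : (∑ c : ZMod p, ∑ xz ∈ Finset.univ.filter
            (fun xz : ZMod p × ZMod p => xz.1 + c * xz.2 = x₀ + c * z₀), Q xz)
          = ∑ xz : ZMod p × ZMod p, Q xz *
            ((Finset.univ.filter (fun c : ZMod p => xz.1 + c * xz.2 = x₀ + c * z₀)).card : ℝ) := by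
        simp only [Finset.sum_filter]
        rw [Finset.sum_comm]
        refine Finset.sum_congr rfl ?_
        intro xz _
        rw [← Finset.sum_filter, Finset.sum_const, nsmul_eq_mul, mul_comm]
      have step3 : ∑ xz ∈ Finset.univ.filter (fun xz : ZMod p × ZMod p => xz.2 = z₀), Q xz
          = ∑ xz : ZMod p × ZMod p, Q xz * (if xz.2 = z₀ then (1:ℝ) else 0) := by
        rw [Finset.sum_filter]
        refine Finset.sum_congr rfl ?_
        intro xz _
        by_cases h : xz.2 = z₀ <;> simp [h]
      have split : (∑ xz : ZMod p × ZMod p, Q xz *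
          (((Finset.univ.filter (fun c : ZMod p => xz.1 + c * xz.2 = x₀ + c * z₀)).card : ℝ)
            + (if xz.2 = z₀ then (1:ℝ) else 0)))
          = (∑ c : ZMod p, ∑ xz ∈ Finset.univ.filter
              (fun xz : ZMod p × ZMod p => xz.1 + c * xz.2 = x₀ + c * z₀), Q xz)
            + ∑ xz ∈ Finset.univ.filter (fun xz : ZMod p × ZMod p => xz.2 = z₀), Q xz := by
        rw [step2, step3, ← Finset.sum_add_distrib]
        refine Finset.sum_congr rfl ?_
        intro xz _
        ring
      rw [split]
      simp [hQX, hQZ]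
    have hmain2 : (∑ xz : ZMod p × ZMod p, Q xz *
        (1 + (if xz = (x₀, z₀) then (p:ℝ) else 0))) = 0 := by
      refine Eq.trans ?_ hmain
      refine Finset.sum_congr rfl ?_
      rintro ⟨x, z⟩ _
      exact congrArg (Q (x, z) * ·) (hcard x z).symm
    have hmain3 : (∑ xz : ZMod p × ZMod p, Q xz) + (p:ℝ) * Q (x₀, z₀) = 0 := by
      refine Eq.trans ?_ hmain2
      rw [show (∑ xz : ZMod p × ZMod p, Q xz * (1 + (if xz = (x₀, z₀) then (p:ℝ) else 0)))
        = (∑ xz : ZMod p × ZMod p, (Q xz + (if xz = (x₀, z₀) then Q xz * (p:ℝ) else 0))) from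
        Finset.sum_congr rfl (fun xz _ => by by_cases h : xz = (x₀, z₀) <;> simp [h] <;> ring)]
      rw [Finset.sum_add_distrib]
      congr 1
      rw [Finset.sum_ite_eq' Finset.univ (x₀, z₀) (fun xz => Q xz * (p:ℝ))]
      simp [mul_comm]
    rw [hQsum, zero_add] at hmain3
    rcases mul_eq_zero.mp hmain3 with h | h
    · exact absurd h hp
    · exact h
  funext xz
  have := key xz
  simp only [hQdef] at this
  linarith
end

section
/- Let H_A, H_B, H_E be finite-dimensional complex Hilbert spaces with dim H_A = dim H_B = d, let |ψ⟩ ∈ H_A ⊗ H_B ⊗ H_E be a unit vector, and set τ_{AB} := Tr_E |ψ⟩⟨ψ| and τ_{AE} := Tr_B |ψ⟩⟨ψ|. Assume τ_{AB} is maximally correlated: there exist orthonormal bases {v_j^A}_{j=1}^d of H_A and {v_j^B}_{j=1}^d of H_B and complex coefficients a_{j,j'} with τ_{AB} = Σ_{j,j'} a_{j,j'} |v_j^A ⊗ v_j^B⟩⟨v_{j'}^A ⊗ v_{j'}^B|. Then there exist unit vectors u_1, …, u_d ∈ H_E such that τ_{AE} = Σ_{j=1}^d [(I_A ⊗ ⟨v_j^B|)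 τ_{AB} (I_A ⊗ |v_j^B⟩)] ⊗ |u_j⟩⟨u_j|; in other words, the measure-and-prepare channel Γ(ρ) := Σ_j ⟨v_j^B|ρ|v_j^B⟩ |u_j⟩⟨u_j| from operators on H_B to operators on H_E satisfies (id_A ⊗ Γ)(τ_{AB}) = τ_{AE}. -/
/-!
Write `φ_j := (I_A ⊗ ⟨v_j^B| ⊗ I_E) ψ`. Expanding `ψ` in the basis `v^B` gives
`τ_AE = ∑ j, |φ_j⟩⟨φ_j|`, while `(I_A ⊗ ⟨v_j^B|) τ_AB (I_A ⊗ |v_j^B⟩) = Tr_E |φ_j⟩⟨φ_j|`.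
Maximal correlation makes `τ_AB` annihilate `v_i^A ⊗ v_j^B` for `i ≠ j`; as `τ_AB = Ψ Ψᴴ` with
`Ψ : AB → E` the reshaped `ψ`, this kills the `v_i^A`-component of `φ_j`, so `φ_j = v_j^A ⊗ w_j`.
For such a product vector `|φ_j⟩⟨φ_j| = Tr_E |φ_j⟩⟨φ_j| ⊗ |u_j⟩⟨u_j|` with `u_j = w_j / ‖w_j‖`.
-/

open scoped Kronecker
open Matrix

variable {ι α β ε : Type*}

def IsOrthonormalBasis [Fintype ι] [DecidableEq ι] (v : ι → ι → ℂ) : Prop :=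
  ∀ j k, star (v j) ⬝ᵥ v k = if j = k then 1 else 0

namespace IsOrthonormalBasis

variable [Fintype ι] [DecidableEq ι] {v : ι → ι → ℂ}

theorem sum_vecMulVec (hv : IsOrthonormalBasis v) : ∑ j, vecMulVec (star (v j)) (v j) = 1 := by
  have hU : of v * (of v)ᴴ = 1 := by
    ext j k
    simpa [mul_apply, one_apply, dotProduct, mul_comm, eq_comm] using hv k j
  rw [← mul_eq_one_comm.mp hU]
  ext b b'
  simp [mul_apply, Matrix.sum_apply, vecMulVec_apply]

theorem sum_dotProduct_smul (hv : IsOrthonormalBasis v) (f : ι → ℂ) :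
    ∑ j, (star (v j) ⬝ᵥ f) • v j = f := by
  conv_rhs => rw [← vecMul_one f, ← hv.sum_vecMulVec]
  simp [vecMul_sum, vecMul_vecMulVec, dotProduct_comm]

end IsOrthonormalBasis

theorem star_prod_dotProduct_prod [Fintype α] [Fintype β] (x x' : α → ℂ) (y y' : β → ℂ) :
    star (fun p : α × β => x p.1 * y p.2) ⬝ᵥ (fun p => x' p.1 * y' p.2)
      = (star x ⬝ᵥ x') * (star y ⬝ᵥ y') := by
  simp only [dotProduct, Fintype.sum_prod_type, Fintype.sum_mul_sum, Pi.star_apply, star_mul']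
  exact Finset.sum_congr rfl fun _ _ => Finset.sum_congr rfl fun _ _ => by ring

theorem vecMulVec_prod (x : α → ℂ) (w : ε → ℂ) :
    vecMulVec (fun p : α × ε => x p.1 * w p.2) (star fun p => x p.1 * w p.2)
      = vecMulVec x (star x) ⊗ₖ vecMulVec w (star w) := by
  ext ⟨a, e⟩ ⟨a', e'⟩
  simp only [vecMulVec_apply, kronecker_apply, Pi.star_apply, star_mul']
  ring

def traceRight [Fintype ε] (ρ : Matrix (α × ε) (α × ε) ℂ) : Matrix α α ℂ :=
  of fun a a' => ∑ e, ρ (a, e) (a', e)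

theorem traceRight_kronecker [Fintype ε] (A : Matrix α α ℂ) (B : Matrix ε ε ℂ) :
    traceRight (A ⊗ₖ B) = B.trace • A := by
  ext a a'
  simp [traceRight, trace, Finset.mul_sum, mul_comm]

theorem kronecker_eq_traceRight_kronecker [Fintype ε] {P : Matrix α α ℂ} {Q R : Matrix ε ε ℂ}
    (h : Q = Q.trace • R) : P ⊗ₖ Q = traceRight (P ⊗ₖ Q) ⊗ₖ R := by
  rw [traceRight_kronecker, smul_kronecker, ← kronecker_smul, ← h]

theorem exists_unit_vecMulVec_eq_trace_smul [Fintype ε] [Nonempty ε] (w : ε → ℂ) :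
    ∃ u : ε → ℂ, ∑ e, Complex.normSq (u e) = 1 ∧
      vecMulVec w (star w) = (vecMulVec w (star w)).trace • vecMulVec u (star u) := by
  classical
  set N := ∑ e, Complex.normSq (w e) with hN_def
  have htrace : (vecMulVec w (star w)).trace = N := by
    simp [N, trace_vecMulVec, dotProduct, Complex.mul_conj]
  by_cases hw : w = 0
  · obtain ⟨e₀⟩ := ‹Nonempty ε›
    refine ⟨Pi.single e₀ 1, ?_, by simp [hw]⟩
    simp [Pi.single_apply, apply_ite Complex.normSq]
  have hN : 0 < N := by
    obtain ⟨e, he⟩ := Function.ne_iff.mp hw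
    exact Finset.sum_pos' (fun e _ => Complex.normSq_nonneg _)
      ⟨e, Finset.mem_univ _, Complex.normSq_pos.mpr he⟩
  have hsq : Real.sqrt N ^ 2 = N := Real.sq_sqrt hN.le
  have hs : (Real.sqrt N : ℂ) ≠ 0 := by exact_mod_cast (Real.sqrt_pos.mpr hN).ne'
  refine ⟨((Real.sqrt N)⁻¹ : ℂ) • w, ?_, ?_⟩
  · simp only [Pi.smul_apply, smul_eq_mul, Complex.normSq_mul, ← Finset.mul_sum, ← hN_def]
    rw [← Complex.ofReal_inv, Complex.normSq_ofReal]
    field_simp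
    exact hsq.symm
  · ext e e'
    have hN2 : (N : ℂ) = (Real.sqrt N : ℂ) ^ 2 := by exact_mod_cast hsq.symm
    simp only [htrace, hN2, Matrix.smul_apply, vecMulVec_apply, Pi.star_apply, Pi.smul_apply,
      smul_eq_mul, star_mul', star_inv₀, Complex.star_def, Complex.conj_ofReal]
    field_simp
def marginalAB [Fintype ε] (ψ : α × β × ε → ℂ) : Matrix (α × β) (α × β) ℂ :=
  of fun ab ab' => ∑ e, vecMulVec ψ (star ψ) (ab.1, ab.2, e) (ab'.1, ab'.2, e)

def marginalAE [Fintype β] (ψ : α × β × ε → ℂ) : Matrix (α × ε) (α × ε) ℂ :=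
  of fun ae ae' => ∑ b, vecMulVec ψ (star ψ) (ae.1, b, ae.2) (ae'.1, b, ae'.2)

def compressRight [Fintype β] (ρ : Matrix (α × β) (α × β) ℂ) (y : β → ℂ) : Matrix α α ℂ :=
  of fun a₁ a₂ => ∑ b, ∑ b', starRingEnd ℂ (y b) * ρ (a₁, b) (a₂, b') * y b'

def contractB [Fintype β] (ψ : α × β × ε → ℂ) (y : β → ℂ) : α × ε → ℂ :=
  fun ae => ∑ b, starRingEnd ℂ (y b) * ψ (ae.1, b, ae.2)

theorem marginalAE_eq_sum_vecMulVec_contractB [Fintype β] [DecidableEq β] (ψ : α × β × ε → ℂ)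
    {v : β → β → ℂ} (hv : IsOrthonormalBasis v) :
    marginalAE ψ = ∑ j, vecMulVec (contractB ψ (v j)) (star (contractB ψ (v j))) := by
  set Ψ : Matrix (α × ε) β ℂ := of fun ae b => ψ (ae.1, b, ae.2)
  have hmarg : marginalAE ψ = Ψ * Ψᴴ := by
    ext; simp [marginalAE, Ψ, mul_apply, vecMulVec_apply]
  have hcontract : ∀ y, contractB ψ y = Ψ *ᵥ star y := by
    intro y; ext; simp [contractB, Ψ, mulVec, dotProduct, mul_comm]
  simp only [hcontract, star_mulVec, star_star, ← vecMulVec_mul, ← mul_vecMulVec, hmarg]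
  rw [← Matrix.sum_mul, ← Matrix.mul_sum, hv.sum_vecMulVec, Matrix.mul_one]

theorem compressRight_marginalAB [Fintype β] [Fintype ε] (ψ : α × β × ε → ℂ) (y : β → ℂ) :
    compressRight (marginalAB ψ) y
      = traceRight (vecMulVec (contractB ψ y) (star (contractB ψ y))) := by
  ext a a'
  simp only [compressRight, marginalAB, traceRight, contractB, of_apply, vecMulVec_apply,
    Pi.star_apply, star_sum, star_mul', Complex.star_def, Complex.conj_conj,
    Finset.mul_sum, Finset.sum_mul]
  refine (Finset.sum_congr rfl fun b _ => Finset.sum_comm).trans ?_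
  refine Finset.sum_comm.trans (Finset.sum_congr rfl fun e _ => Finset.sum_comm.trans ?_)
  exact Finset.sum_congr rfl fun _ _ => Finset.sum_congr rfl fun _ _ => by ring

open scoped ComplexOrder in
theorem sum_star_mul_eq_zero_of_marginalAB_mulVec_eq_zero [Fintype α] [Fintype β] [Fintype ε]
    (ψ : α × β × ε → ℂ) {y : α × β → ℂ} (h : marginalAB ψ *ᵥ y = 0) (e : ε) :
    ∑ ab, starRingEnd ℂ (y ab) * ψ (ab.1, ab.2, e) = 0 := by
  set Ψ : Matrix (α × β) ε ℂ := of fun ab e => ψ (ab.1, ab.2, e)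
  have hmarg : marginalAB ψ = Ψ * Ψᴴ := by
    ext; simp [marginalAB, Ψ, mul_apply, vecMulVec_apply]
  rw [hmarg, self_mul_conjTranspose_mulVec_eq_zero] at h
  simpa [Ψ, mulVec, dotProduct, mul_comm] using congrArg star (congrFun h e)

def IsMaximallyCorrelated [Fintype ι] (ρ : Matrix (ι × ι) (ι × ι) ℂ) (vA vB : ι → ι → ℂ) : Prop :=
  ∃ a : ι → ι → ℂ, ρ = ∑ j, ∑ j', a j j' •
    vecMulVec (fun p : ι × ι => vA j p.1 * vB j p.2) (star fun p : ι × ι => vA j' p.1 * vB j' p.2)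

theorem IsMaximallyCorrelated.mulVec_eq_zero [Fintype ι] [DecidableEq ι]
    {ρ : Matrix (ι × ι) (ι × ι) ℂ} {vA vB : ι → ι → ℂ} (hρ : IsMaximallyCorrelated ρ vA vB)
    (hvA : IsOrthonormalBasis vA) (hvB : IsOrthonormalBasis vB) {i j : ι} (hij : i ≠ j) :
    ρ *ᵥ (fun p => vA i p.1 * vB j p.2) = 0 := by
  obtain ⟨a, rfl⟩ := hρ
  have horth : ∀ s, star (fun p : ι × ι => vA s p.1 * vB s p.2) ⬝ᵥ
      (fun p => vA i p.1 * vB j p.2) = 0 := by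
    intro s
    rw [star_prod_dotProduct_prod, hvA s i, hvB s j]
    split_ifs <;> simp_all
  simp [sum_mulVec, smul_mulVec, vecMulVec_mulVec, horth]

theorem IsMaximallyCorrelated.exists_contractB_eq_prod [Fintype ι] [DecidableEq ι] [Fintype ε]
    {ψ : ι × ι × ε → ℂ} {vA vB : ι → ι → ℂ} (hmc : IsMaximallyCorrelated (marginalAB ψ) vA vB)
    (hvA : IsOrthonormalBasis vA) (hvB : IsOrthonormalBasis vB) (j : ι) :
    ∃ w : ε → ℂ, contractB ψ (vB j) = fun p => vA j p.1 * w p.2 := by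
  set φ := contractB ψ (vB j)
  have hcoeff : ∀ i, i ≠ j → ∀ e, star (vA i) ⬝ᵥ (fun a => φ (a, e)) = 0 := by
    intro i hij e
    rw [← sum_star_mul_eq_zero_of_marginalAB_mulVec_eq_zero ψ (hmc.mulVec_eq_zero hvA hvB hij) e,
      Fintype.sum_prod_type]
    simp [φ, contractB, dotProduct, Finset.mul_sum, mul_assoc]
  refine ⟨fun e => star (vA j) ⬝ᵥ (fun a => φ (a, e)), funext fun ⟨a, e⟩ => ?_⟩
  have hexpand := congrFun (hvA.sum_dotProduct_smul fun a => φ (a, e)) a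
  rw [Finset.sum_apply, Finset.sum_eq_single j (fun i _ hij => by simp [hcoeff i hij e])
    (by simp)] at hexpand
  simp [← hexpand, mul_comm]

/-- If `τ_AB` (the `AB` marginal of a tripartite pure state) is maximally
correlated, then `τ_AE` is obtained from `τ_AB` by a measure-and-prepare channel on `B`. -/
theorem maximally_correlated_degraded
    {d dE : ℕ}
    (ψ : Fin d × Fin d × Fin dE → ℂ)
    (hψ : ∑ i, Complex.normSq (ψ i) = 1)
    (vA vB : Fin d → Fin d → ℂ)
    (hvA : ∀ j k, ∑ i, (starRingEnd ℂ) (vA j i) * vA k i = if j = k then 1 else 0)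
    (hvB : ∀ j k, ∑ i, (starRingEnd ℂ) (vB j i) * vB k i = if j = k then 1 else 0)
    (a : Fin d → Fin d → ℂ)
    (hmc : (Matrix.of fun (ab ab' : Fin d × Fin d) =>
        ∑ e, Matrix.vecMulVec ψ (star ψ) (ab.1, ab.2, e) (ab'.1, ab'.2, e))
      = ∑ j : Fin d, ∑ j' : Fin d, a j j' •
          Matrix.vecMulVec (fun i : Fin d × Fin d => vA j i.1 * vB j i.2)
            (star (fun i : Fin d × Fin d => vA j' i.1 * vB j' i.2))) :
    ∃ u : Fin d → Fin dE → ℂ,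
      (∀ j, ∑ k, Complex.normSq (u j k) = 1) ∧
      (Matrix.of fun (ae ae' : Fin d × Fin dE) =>
          ∑ b, Matrix.vecMulVec ψ (star ψ) (ae.1, b, ae.2) (ae'.1, b, ae'.2))
        = ∑ j : Fin d,
            (Matrix.of fun a₁ a₂ : Fin d =>
              ∑ b, ∑ b', (starRingEnd ℂ) (vB j b) *
                (Matrix.of fun (ab ab' : Fin d × Fin d) =>
                  ∑ e, Matrix.vecMulVec ψ (star ψ) (ab.1, ab.2, e) (ab'.1, ab'.2, e))
                  (a₁, b) (a₂, b') * vB j b')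
            ⊗ₖ Matrix.vecMulVec (u j) (star (u j)) := by
  have : Nonempty (Fin dE) := by
    obtain ⟨⟨-, -, e⟩, -⟩ := Finset.nonempty_of_sum_ne_zero (hψ ▸ one_ne_zero)
    exact ⟨e⟩
  choose w hw using IsMaximallyCorrelated.exists_contractB_eq_prod ⟨a, hmc⟩ hvA hvB
  choose u hu_unit hu using fun j => exists_unit_vecMulVec_eq_trace_smul (w j)
  refine ⟨u, hu_unit, ?_⟩
  change marginalAE ψ = ∑ j, compressRight (marginalAB ψ) (vB j) ⊗ₖ vecMulVec (u j) (star (u j))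
  rw [marginalAE_eq_sum_vecMulVec_contractB ψ hvB]
  refine Finset.sum_congr rfl fun j _ => ?_
  rw [compressRight_marginalAB, hw j, vecMulVec_prod]
  exact kronecker_eq_traceRight_kronecker (hu j)
end
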